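/- In QHC, ⊢ ¬∇α ↔ ¬α and ⊢ ∇¬α ↔ ¬α, where ∇α := !?α. -/

import Mathlib

/- Problem (intuitionistic) formulas and proposition (classical) formulas of QHC. -/
mutual
inductive PF : Type
  | var : Nat → PF
  | bot : PF
  | and : PF → PF → PF
  | or : PF → PF → PF
  | imp : PF → PF → PF
  | bang : CF → PF
inductive CF : Type
  | var : Nat → CF
  | fls : CF
  | and : CF → CF → CF
  | or : CF → CF → CF
  | imp : CF → CF → CF
  | quest : PF → CF
end

def PF.neg (α : PF) : PF := α.imp PF.bot
def CF.neg (p : CF) : CF := p.imp CF.fls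
def PF.iff (α β : PF) : PF := (α.imp β).and (β.imp α)
def CF.iff (p q : CF) : CF := (p.imp q).and (q.imp p)
def CF.box (p : CF) : CF := CF.quest (PF.bang p)
def PF.nabla (α : PF) : PF := PF.bang (CF.quest α)

/- Derivability in QHC, parameterized by a set `Ax` of extra problem axioms
(used to treat the axiom ¬!0 and its variants uniformly). Intuitionistic logic
on problems, classical logic on propositions, the rules α ⊢ ?α and p ⊢ !p, and
the mixed axioms ?!p → p, α → !?α, !(p→q) → (!p → !q), ?(α→β) → (?α → ?β). -/
mutual
inductive ProvP (Ax : PF → Prop) : PF → Prop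
  | axm {α} : Ax α → ProvP Ax α
  | mp {α β} : ProvP Ax (α.imp β) → ProvP Ax α → ProvP Ax β
  | ak (α β : PF) : ProvP Ax (α.imp (β.imp α))
  | as (α β γ : PF) : ProvP Ax ((α.imp (β.imp γ)).imp ((α.imp β).imp (α.imp γ)))
  | andI (α β : PF) : ProvP Ax (α.imp (β.imp (α.and β)))
  | andE1 (α β : PF) : ProvP Ax ((α.and β).imp α)
  | andE2 (α β : PF) : ProvP Ax ((α.and β).imp β)
  | orI1 (α β : PF) : ProvP Ax (α.imp (α.or β))
  | orI2 (α β : PF) : ProvP Ax (β.imp (α.or β))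
  | orE (α β γ : PF) : ProvP Ax ((α.imp γ).imp ((β.imp γ).imp ((α.or β).imp γ)))
  | exf (α : PF) : ProvP Ax (PF.bot.imp α)
  | bangIntro {p} : ProvC Ax p → ProvP Ax (PF.bang p)
  | bangImp (p q : CF) : ProvP Ax ((PF.bang (p.imp q)).imp ((PF.bang p).imp (PF.bang q)))
  | bangQuest (α : PF) : ProvP Ax (α.imp (PF.bang (CF.quest α)))
inductive ProvC (Ax : PF → Prop) : CF → Prop
  | mp {p q} : ProvC Ax (p.imp q) → ProvC Ax p → ProvC Ax q
  | ak (p q : CF) : ProvC Ax (p.imp (q.imp p))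
  | as (p q r : CF) : ProvC Ax ((p.imp (q.imp r)).imp ((p.imp q).imp (p.imp r)))
  | andI (p q : CF) : ProvC Ax (p.imp (q.imp (p.and q)))
  | andE1 (p q : CF) : ProvC Ax ((p.and q).imp p)
  | andE2 (p q : CF) : ProvC Ax ((p.and q).imp q)
  | orI1 (p q : CF) : ProvC Ax (p.imp (p.or q))
  | orI2 (p q : CF) : ProvC Ax (q.imp (p.or q))
  | orE (p q r : CF) : ProvC Ax ((p.imp r).imp ((q.imp r).imp ((p.or q).imp r)))
  | exf (p : CF) : ProvC Ax (CF.fls.imp p)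
  | lem (p : CF) : ProvC Ax (p.or (p.imp CF.fls))
  | questIntro {α} : ProvP Ax α → ProvC Ax (CF.quest α)
  | questImp (α β : PF) : ProvC Ax ((CF.quest (α.imp β)).imp ((CF.quest α).imp (CF.quest β)))
  | questBang (p : CF) : ProvC Ax ((CF.quest (PF.bang p)).imp p)
end

/-- The axiom (!⊥): ¬!0. -/
def QHCAx : PF → Prop := fun α => α = (PF.bang CF.fls).imp PF.bot

/-- Derivability of a problem in QHC. -/
def PrvP (α : PF) : Prop := ProvP QHCAx α
/-- Derivability of a proposition in QHC. -/
def PrvC (p : CF) : Prop := ProvC QHCAx p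

/-! ∇ = !? behaves like a monad on problems: it is monotone, has the unit α → ∇α, and
distributes over implication. Together with ?!p → p, the axiom ¬!0 makes ∇⊥ refutable, so
∇¬α → ∇α → ∇⊥ → ⊥. This closes the cycle ¬∇α → ¬α → ∇¬α → ¬∇α, whose other two
arrows are the contrapositive of the unit and the unit itself. -/

namespace ProvP

variable {Ax : PF → Prop} {α β : PF}

theorem imp_postcomp (γ : PF) (h : ProvP Ax (α.imp β)) : ProvP Ax ((γ.imp α).imp (γ.imp β)) :=
  mp (as γ α β) (mp (ak _ γ) h)

theorem imp_trans {γ : PF} (h₁ : ProvP Ax (α.imp β)) (h₂ : ProvP Ax (β.imp γ)) :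
    ProvP Ax (α.imp γ) :=
  mp (imp_postcomp α h₂) h₁

theorem imp_precomp (γ : PF) (h : ProvP Ax (α.imp β)) : ProvP Ax ((β.imp γ).imp (α.imp γ)) :=
  mp (mp (as _ _ _) (imp_trans (ak _ α) (as α β γ))) (mp (ak _ _) h)

theorem iff_intro (h₁ : ProvP Ax (α.imp β)) (h₂ : ProvP Ax (β.imp α)) :
    ProvP Ax (PF.iff α β) :=
  mp (mp (andI _ _) h₁) h₂

theorem bang_mono {p q : CF} (h : ProvC Ax (p.imp q)) :
    ProvP Ax ((PF.bang p).imp (PF.bang q)) :=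
  mp (bangImp p q) (bangIntro h)

end ProvP

theorem ProvC.quest_mono {Ax : PF → Prop} {α β : PF} (h : ProvP Ax (α.imp β)) :
    ProvC Ax ((CF.quest α).imp (CF.quest β)) :=
  mp (questImp α β) (questIntro h)

namespace PF

variable {Ax : PF → Prop}

theorem nabla_mono {α β : PF} (h : ProvP Ax (α.imp β)) : ProvP Ax (α.nabla.imp β.nabla) :=
  ProvP.bang_mono (ProvC.quest_mono h)

theorem nabla_imp_nabla (α β : PF) :
    ProvP Ax ((α.imp β).nabla.imp (α.nabla.imp β.nabla)) :=
  ProvP.imp_trans (ProvP.bang_mono (ProvC.questImp α β)) (ProvP.bangImp _ _)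

theorem nabla_bot_imp_bot (hbot : ProvP Ax (bang CF.fls).neg) : ProvP Ax (bot.nabla.imp bot) :=
  ProvP.imp_trans (nabla_mono (ProvP.exf (bang CF.fls)))
    (ProvP.imp_trans (ProvP.bang_mono (ProvC.questBang CF.fls)) hbot)

theorem nabla_neg_imp_neg_nabla (hbot : ProvP Ax (bang CF.fls).neg) (α : PF) :
    ProvP Ax (α.neg.nabla.imp α.nabla.neg) :=
  ProvP.imp_trans (nabla_imp_nabla α bot) (ProvP.imp_postcomp _ (nabla_bot_imp_bot hbot))

end PF

theorem qhc_neg_nabla (α : PF) :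
    PrvP (PF.iff (PF.neg (PF.nabla α)) (PF.neg α)) ∧
    PrvP (PF.iff (PF.nabla (PF.neg α)) (PF.neg α)) := by
  have hbot : PrvP (PF.bang CF.fls).neg := ProvP.axm rfl
  have neg_nabla_imp_neg : PrvP (α.nabla.neg.imp α.neg) := ProvP.imp_precomp _ (ProvP.bangQuest α)
  have nabla_neg_imp_neg_nabla := PF.nabla_neg_imp_neg_nabla hbot α
  exact ⟨ProvP.iff_intro neg_nabla_imp_neg
      (ProvP.imp_trans (ProvP.bangQuest α.neg) nabla_neg_imp_neg_nabla),
    ProvP.iff_intro (ProvP.imp_trans nabla_neg_imp_neg_nabla neg_nabla_imp_neg)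
      (ProvP.bangQuest α.neg)⟩
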